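/- Let n1, n2 > 0 be real weights, ν1, ν2 ∈ [0, 1], p ∈ (0, 1), and L(δ) = (1/(n1 + n2)) · [ n1·ℓ(ν1, p + δ) + n2·ℓ(ν2, p − (n1/n2)·δ) ]. If ν1 > ν2 then L′(0) < 0, and if ν1 < ν2 then L′(0) > 0. In particular, to first order the validation loss strictly decreases for a positive shift δ > 0 on arm 1 if and only if the validation difference ν1 − ν2 is positive. -/

import Mathlib

/-- The binary-outcome log loss of a constant prediction `p ∈ (0,1)`
against a target mean `ν ∈ [0,1]`. -/
noncomputable def logLoss (ν p : ℝ) : ℝ :=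
  -ν * Real.log p - (1 - ν) * Real.log (1 - p)

/-
Only the first-order term matters: `∂ₚ ℓ(ν, p) = (p - ν) / (p (1 - p))`, so moving arm 1 by `δ`
and arm 2 by `-(n1/n2) δ` changes the loss at rate
`(n1 (p - ν1) - n1 (p - ν2)) / ((n1 + n2) p (1 - p)) = n1 (ν2 - ν1) / ((n1 + n2) p (1 - p))`.
The common prediction `p` cancels, and the denominator is positive, so the sign is that of `ν2 - ν1`.
-/

theorem hasDerivAt_logLoss (ν : ℝ) {p : ℝ} (hp0 : p ≠ 0) (hp1 : p ≠ 1) :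
    HasDerivAt (logLoss ν) ((p - ν) / (p * (1 - p))) p := by
  have h1p : 1 - p ≠ 0 := sub_ne_zero.mpr (Ne.symm hp1)
  have hlog : HasDerivAt Real.log p⁻¹ p := Real.hasDerivAt_log hp0
  have hlog1 : HasDerivAt (fun q => Real.log (1 - q)) (-1 / (1 - p)) p := by
    simpa using ((hasDerivAt_id p).const_sub 1).log h1p
  refine ((hlog.const_mul (-ν)).sub (hlog1.const_mul (1 - ν))).congr_deriv ?_
  field_simp
  ring

theorem hasDerivAt_logLoss_affine (ν a : ℝ) {p : ℝ} (hp0 : p ≠ 0) (hp1 : p ≠ 1) :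
    HasDerivAt (fun δ => logLoss ν (p + a * δ)) (a * ((p - ν) / (p * (1 - p)))) 0 := by
  have hline : HasDerivAt (fun δ : ℝ => p + a * δ) a 0 := by
    simpa using ((hasDerivAt_id (0 : ℝ)).const_mul a).const_add p
  rw [mul_comm]
  exact (hasDerivAt_logLoss ν hp0 hp1).comp_of_eq 0 hline (by simp)

theorem deriv_validationLoss_sign_general
    (n1 n2 ν1 ν2 p : ℝ) (hn1 : 0 < n1) (hn2 : 0 < n2)
    (hp : p ∈ Set.Ioo (0 : ℝ) 1)
    (L : ℝ → ℝ)
    (hL : ∀ δ : ℝ, L δ = (1 / (n1 + n2)) *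
      (n1 * logLoss ν1 (p + δ) + n2 * logLoss ν2 (p - (n1 / n2) * δ))) :
    (ν1 > ν2 → deriv L 0 < 0) ∧ (ν1 < ν2 → deriv L 0 > 0) := by
  obtain ⟨hp0, hp1⟩ := hp
  have hL' : L = fun δ => (1 / (n1 + n2)) *
      (n1 * logLoss ν1 (p + 1 * δ) + n2 * logLoss ν2 (p + -(n1 / n2) * δ)) := by
    funext δ; rw [hL]; ring_nf
  have hderiv : deriv L 0 = n1 * (ν2 - ν1) / ((n1 + n2) * p * (1 - p)) := by
    have hD : HasDerivAt L _ 0 := hL' ▸ ((((hasDerivAt_logLoss_affine ν1 1 hp0.ne' hp1.ne).const_mul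
      n1).add ((hasDerivAt_logLoss_affine ν2 (-(n1 / n2)) hp0.ne' hp1.ne).const_mul n2)).const_mul
      (1 / (n1 + n2)))
    rw [hD.deriv]
    field_simp
    ring
  have hden : 0 < (n1 + n2) * p * (1 - p) := by
    have : 0 < 1 - p := sub_pos.mpr hp1
    positivity
  rw [hderiv]
  exact ⟨fun h => div_neg_of_neg_of_pos (by nlinarith) hden,
    fun h => div_pos (by nlinarith) hden⟩

/-- For the weighted validation log loss `L`, the derivative at `δ = 0` is negative when
`ν1 > ν2` and positive when `ν1 < ν2`: to first order, a positive shift on arm 1 strictly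
decreases the validation loss exactly when the validation difference `ν1 − ν2` is positive. -/
theorem deriv_validationLoss_sign
    (n1 n2 ν1 ν2 p : ℝ) (hn1 : 0 < n1) (hn2 : 0 < n2)
    (hν1 : ν1 ∈ Set.Icc (0 : ℝ) 1) (hν2 : ν2 ∈ Set.Icc (0 : ℝ) 1)
    (hp : p ∈ Set.Ioo (0 : ℝ) 1)
    (L : ℝ → ℝ)
    (hL : ∀ δ : ℝ, L δ = (1 / (n1 + n2)) *
      (n1 * logLoss ν1 (p + δ) + n2 * logLoss ν2 (p - (n1 / n2) * δ))) :
    (ν1 > ν2 → deriv L 0 < 0) ∧ (ν1 < ν2 → deriv L 0 > 0) :=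
  deriv_validationLoss_sign_general n1 n2 ν1 ν2 p hn1 hn2 hp L hL
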